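/- Let S = conv(X₁, …, X_N) be a conditional simplex in (L⁰)^d with barycentric subdivision (C_π)_{π ∈ S_N}. Then σ(⋃_{π ∈ S_N} C_π) = S. -/

import Mathlib

open MeasureTheory Filter

noncomputable section

variable {Ω : Type*} [MeasurableSpace Ω]

/-- `L⁰(Ω,𝒜,P)`: equivalence classes of real-valued measurable functions modulo
`P`-almost-sure equality. -/
abbrev L0 (P : Measure Ω) : Type _ := Ω →ₘ[P] ℝ

namespace L0

variable (P : Measure Ω)

/-- The indicator `1_A` of a measurable set as an element of `L⁰`. -/
def ind (A : Set Ω) : L0 P :=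
  letI := Classical.dec (MeasurableSet A)
  if h : MeasurableSet A then
    AEEqFun.mk (A.indicator fun _ => (1 : ℝ)) (aestronglyMeasurable_const.indicator h)
  else 0

/-- A partition: a countable family of measurable sets, pairwise disjoint up to null
sets, covering `Ω` up to a null set. -/
structure IsPartition (A : ℕ → Set Ω) : Prop where
  meas : ∀ i, MeasurableSet (A i)
  disj : ∀ i j, i ≠ j → P (A i ∩ A j) = 0
  full : P (⋃ i, A i) = 1

/-- `Z = Σᵢ 1_{Aᵢ} Xᵢ` in `L⁰`: `Z` agrees with `Xᵢ` on `Aᵢ`, i.e. `1_{Aᵢ}·Z = 1_{Aᵢ}·Xᵢ`. -/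
def IsGluing1 (A : ℕ → Set Ω) (X : ℕ → L0 P) (Z : L0 P) : Prop :=
  ∀ i, ind P (A i) * Z = ind P (A i) * X i

/-- `Z = Σᵢ 1_{Aᵢ} Xᵢ` in `(L⁰)^d`. -/
def IsGluing {d : ℕ} (A : ℕ → Set Ω) (X : ℕ → Fin d → L0 P) (Z : Fin d → L0 P) : Prop :=
  ∀ k, IsGluing1 P A (fun i => X i k) (Z k)

/-- The σ-stable hull `σ(𝒞)` of a set `𝒞 ⊆ (L⁰)^d`. -/
def sigmaHull {d : ℕ} (C : Set (Fin d → L0 P)) : Set (Fin d → L0 P) :=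
  {Z | ∃ (A : ℕ → Set Ω) (X : ℕ → Fin d → L0 P),
    IsPartition P A ∧ (∀ i, X i ∈ C) ∧ IsGluing P A X Z}

/-- A function `f` defined (at least) on a σ-stable set `C ⊆ (L⁰)^d` is local if
`f(Σᵢ 1_{Aᵢ} Xᵢ) = Σᵢ 1_{Aᵢ} f(Xᵢ)` for every partition `(Aᵢ)` and family `(Xᵢ)` in `C`. -/
def IsLocal {d e : ℕ} (C : Set (Fin d → L0 P)) (f : (Fin d → L0 P) → (Fin e → L0 P)) : Prop :=
  ∀ (A : ℕ → Set Ω) (X : ℕ → Fin d → L0 P) (Z : Fin d → L0 P),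
    IsPartition P A → (∀ i, X i ∈ C) → Z ∈ C → IsGluing P A X Z →
    IsGluing P A (fun i => f (X i)) (f Z)

/-- Locality for functions with values in `L⁰`. -/
def IsLocalScalar {d : ℕ} (C : Set (Fin d → L0 P)) (f : (Fin d → L0 P) → L0 P) : Prop :=
  ∀ (A : ℕ → Set Ω) (X : ℕ → Fin d → L0 P) (Z : Fin d → L0 P),
    IsPartition P A → (∀ i, X i ∈ C) → Z ∈ C → IsGluing P A X Z →
    IsGluing1 P A (fun i => f (X i)) (f Z)

/-- Locality for functions from `L⁰` to `L⁰`. -/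
def IsLocal1 (C : Set (L0 P)) (f : L0 P → L0 P) : Prop :=
  ∀ (A : ℕ → Set Ω) (X : ℕ → L0 P) (Z : L0 P),
    IsPartition P A → (∀ i, X i ∈ C) → Z ∈ C → IsGluing1 P A X Z →
    IsGluing1 P A (fun i => f (X i)) (f Z)

/-- `P`-almost sure convergence of a sequence in `L⁰`. -/
def TendstoAS (X : ℕ → L0 P) (Y : L0 P) : Prop :=
  ∀ᵐ ω ∂P, Tendsto (fun n => X n ω) atTop (nhds (Y ω))

/-- `P`-almost sure convergence of a sequence in `(L⁰)^d`. -/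
def TendstoASd {d : ℕ} (X : ℕ → Fin d → L0 P) (Y : Fin d → L0 P) : Prop :=
  ∀ k, TendstoAS P (fun n => X n k) (Y k)

/-- Sequential continuity (w.r.t. `P`-a.s. convergence) of `f` on `C ⊆ (L⁰)^d`. -/
def SeqContinuous {d e : ℕ} (C : Set (Fin d → L0 P)) (f : (Fin d → L0 P) → (Fin e → L0 P)) :
    Prop :=
  ∀ (X : ℕ → Fin d → L0 P) (Y : Fin d → L0 P), (∀ n, X n ∈ C) → Y ∈ C →
    TendstoASd P X Y → TendstoASd P (fun n => f (X n)) (f Y)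

/-- Sequential continuity for functions from `L⁰` to `L⁰`. -/
def SeqContinuous1 (C : Set (L0 P)) (f : L0 P → L0 P) : Prop :=
  ∀ (X : ℕ → L0 P) (Y : L0 P), (∀ n, X n ∈ C) → Y ∈ C →
    TendstoAS P X Y → TendstoAS P (fun n => f (X n)) (f Y)

/-- The `L⁰`-convex hull `conv(X₁,…,X_N)` of a finite family in `(L⁰)^d`. -/
def conv {d : ℕ} {ι : Type*} [Fintype ι] (X : ι → Fin d → L0 P) : Set (Fin d → L0 P) :=
  {Y | ∃ lam : ι → L0 P, (∀ i, 0 ≤ lam i) ∧ (∑ i, lam i) = 1 ∧ Y = ∑ i, lam i • X i}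

/-- The affine hull `aff(X₁,…,X_N)` of a finite family in `(L⁰)^d`. -/
def aff {d : ℕ} {ι : Type*} [Fintype ι] (X : ι → Fin d → L0 P) : Set (Fin d → L0 P) :=
  {Y | ∃ lam : ι → L0 P, (∑ i, lam i) = 1 ∧ Y = ∑ i, lam i • X i}

/-- Affine independence of `X₁,…,X_N` in `(L⁰)^d`: either `N = 1`, or `N > 1` and
`Σᵢ₌₁^{N−1} λᵢ (Xᵢ − X_N) = 0` implies `λ₁ = ⋯ = λ_{N−1} = 0`. -/
def AffInd {d : ℕ} : {N : ℕ} → (X : Fin N → Fin d → L0 P) → Prop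
  | 0, _ => False
  | 1, _ => True
  | (m + 2), X => ∀ lam : Fin (m + 1) → L0 P,
      (∑ i : Fin (m + 1), lam i • (X i.castSucc - X (Fin.last (m + 1)))) = 0 → ∀ i, lam i = 0

/-- The `L⁰`-scalar product on `(L⁰)^d`. -/
def inner {d : ℕ} (X Y : Fin d → L0 P) : L0 P := ∑ k, X k * Y k

/-- The `L⁰`-norm on `(L⁰)^d`. -/
def norm {d : ℕ} (X : Fin d → L0 P) : L0 P :=
  AEEqFun.comp Real.sqrt Real.continuous_sqrt (inner P X X)

/-- `D` is the essential supremum (least upper bound in the `P`-a.s. order) of a set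
`F ⊆ L⁰`. -/
def IsEssSup (F : Set (L0 P)) (D : L0 P) : Prop :=
  (∀ X ∈ F, X ≤ D) ∧ ∀ D' : L0 P, (∀ X ∈ F, X ≤ D') → D ≤ D'

/-- `𝒞 ⊆ (L⁰)^d` is bounded if `esssup_{X ∈ 𝒞} ‖X‖` belongs to `L⁰`. -/
def Bounded {d : ℕ} (C : Set (Fin d → L0 P)) : Prop :=
  ∃ b : L0 P, ∀ X ∈ C, norm P X ≤ b

/-- `𝒞 ⊆ (L⁰)^d` is sequentially closed if it contains all `P`-a.s. limits of its
sequences. -/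
def SeqClosed {d : ℕ} (C : Set (Fin d → L0 P)) : Prop :=
  ∀ (X : ℕ → Fin d → L0 P) (Y : Fin d → L0 P), (∀ n, X n ∈ C) → TendstoASd P X Y → Y ∈ C

/-- `L⁰`-convexity of a subset of `(L⁰)^d`. -/
def L0Convex {d : ℕ} (C : Set (Fin d → L0 P)) : Prop :=
  ∀ X ∈ C, ∀ Y ∈ C, ∀ lam : L0 P, 0 ≤ lam → lam ≤ 1 → lam • X + (1 - lam) • Y ∈ C

/-- The vertices `Y_k^π = (1/k) Σᵢ₌₁ᵏ X_{π(i)}` of the member `C_π` of the barycentric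
subdivision (0-based: `bary P X π k = (1/(k+1)) Σ_{i ≤ k} X_{π(i)}`). -/
def bary {d N : ℕ} (X : Fin N → Fin d → L0 P) (π : Equiv.Perm (Fin N)) (k : Fin N) :
    Fin d → L0 P :=
  ((k.1 + 1 : ℝ)⁻¹) • ∑ i ∈ Finset.univ.filter (· ≤ k), X (π i)

end L0

end

/-!
If the weights of `Z = ∑ λ_j X_j` are ordered, `λ_{π 1} ≥ ⋯ ≥ λ_{π N}`, Abel summation writes
`Z = ∑_k k (λ_{π k} - λ_{π (k+1)}) Y_k^π` (with `λ_{π (N+1)} = 0`), a convex combination of the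
vertices of `C_π`. Sorting the weights pointwise cuts `Ω` into measurable pieces, one per
permutation, and gluing along them puts `Z` in `σ(⋃ C_π)`. Conversely, every `C_π` lies in `S`,
and `S` is σ-stable because the coefficients of the pieces can themselves be glued.
-/

namespace MeasureTheory.AEEqFun

-- Mathlib gives `α →ₘ[μ] ℝ` its pointwise operations but no ring structure; pulling the ring
-- structure of the germs back along `toGerm` keeps those operations as the data.

variable {Ω : Type*} [MeasurableSpace Ω] {P : Measure Ω}

noncomputable instance instNatCastReal : NatCast (Ω →ₘ[P] ℝ) := ⟨fun n => const Ω (n : ℝ)⟩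

noncomputable instance instIntCastReal : IntCast (Ω →ₘ[P] ℝ) := ⟨fun n => const Ω (n : ℝ)⟩

noncomputable instance instCommRingReal : CommRing (Ω →ₘ[P] ℝ) :=
  toGerm_injective.commRing toGerm zero_toGerm one_toGerm add_toGerm mul_toGerm neg_toGerm
    sub_toGerm (fun _ _ => smul_toGerm _ _) (fun _ _ => smul_toGerm _ _) pow_toGerm
    (fun _ => rfl) (fun _ => rfl)

noncomputable instance instAlgebraReal : Algebra ℝ (Ω →ₘ[P] ℝ) :=
  Algebra.ofModule
    (fun c f g => ext <| by
      filter_upwards [coeFn_mul (c • f) g, coeFn_smul c f, coeFn_smul c (f * g), coeFn_mul f g]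
        with ω h₁ h₂ h₃ h₄
      simp only [h₁, h₂, h₃, h₄, Pi.mul_apply, Pi.smul_apply, smul_eq_mul, mul_assoc])
    (fun c f g => ext <| by
      filter_upwards [coeFn_mul f (c • g), coeFn_smul c g, coeFn_smul c (f * g), coeFn_mul f g]
        with ω h₁ h₂ h₃ h₄
      simp only [h₁, h₂, h₃, h₄, Pi.mul_apply, Pi.smul_apply, smul_eq_mul, mul_left_comm])

instance instIsOrderedRingReal : IsOrderedRing (Ω →ₘ[P] ℝ) :=
  Function.Injective.isOrderedRing toGerm zero_toGerm one_toGerm add_toGerm mul_toGerm Iff.rfl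

instance instPosSMulMonoReal : PosSMulMono ℝ (Ω →ₘ[P] ℝ) where
  smul_le_smul_of_nonneg_left c hc f g hfg := by
    rw [← coeFn_le] at hfg ⊢
    filter_upwards [hfg, coeFn_smul c f, coeFn_smul c g] with ω h hf hg
    rw [hf, hg]
    exact mul_le_mul_of_nonneg_left h hc

instance instNontrivialReal [NeZero P] : Nontrivial (Ω →ₘ[P] ℝ) :=
  ⟨0, 1, fun h => zero_ne_one (by simpa only [zero_toGerm, one_toGerm] using congrArg toGerm h)⟩

end MeasureTheory.AEEqFun

section PartialMean

variable {R M : Type*} [CommRing R] [Algebra ℝ R] [AddCommGroup M] [Module R M] [Module ℝ M]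
  [IsScalarTower ℝ R M] {N : ℕ}

noncomputable def partialMean (Y : Fin N → M) (k : Fin N) : M :=
  ((k.1 + 1 : ℝ)⁻¹) • ∑ i ∈ Finset.Iic k, Y i

noncomputable def partialMeanWeight (μ : Fin N → R) (i : Fin N) : R :=
  ∑ k ∈ Finset.Ici i, ((k.1 + 1 : ℝ)⁻¹) • μ k

noncomputable def partialMeanCoeff (a : Fin N → R) (k : Fin N) : R :=
  (k.1 + 1 : ℝ) • (a k - if h : k.1 + 1 < N then a ⟨k.1 + 1, h⟩ else 0)

theorem sum_smul_partialMean (μ : Fin N → R) (Y : Fin N → M) :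
    ∑ k, μ k • partialMean Y k = ∑ i, partialMeanWeight μ i • Y i := by
  simp only [partialMean, partialMeanWeight, smul_comm (μ _), ← smul_assoc, Finset.smul_sum,
    Finset.sum_smul]
  exact Finset.sum_comm' fun k i => by simp

theorem sum_partialMeanWeight (μ : Fin N → R) : ∑ i, partialMeanWeight μ i = ∑ k, μ k := by
  have h := sum_smul_partialMean μ (fun _ => (1 : R))
  have hmean : ∀ k : Fin N, partialMean (fun _ => (1 : R)) k = 1 := fun k => by
    rw [partialMean, Finset.sum_const, Fin.card_Iic, ← Nat.cast_smul_eq_nsmul ℝ, smul_smul]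
    push_cast
    rw [inv_mul_cancel₀ (by positivity), one_smul]
  simpa only [hmean, smul_eq_mul, mul_one] using h.symm

theorem partialMeanWeight_partialMeanCoeff (a : Fin N → R) :
    partialMeanWeight (partialMeanCoeff a) = a := by
  funext i
  set b : ℕ → R := fun m => if h : m < N then a ⟨m, h⟩ else 0
  have hterm : ∀ k : Fin N, ((k.1 + 1 : ℝ)⁻¹) • partialMeanCoeff a k = b k - b (k + 1) := by
    intro k
    rw [partialMeanCoeff, smul_smul, inv_mul_cancel₀ (by positivity), one_smul]
    simp only [b, dif_pos k.2]
  calc partialMeanWeight (partialMeanCoeff a) i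
      = ∑ m ∈ (Finset.Ici i).map Fin.valEmbedding, (b m - b (m + 1)) := by
        simp only [partialMeanWeight, hterm, Finset.sum_map, Fin.valEmbedding_apply]
    _ = b i - b N := by
        rw [Fin.map_valEmbedding_Ici, Finset.sum_Ico_eq_sum_range]
        exact (Finset.sum_range_sub' (fun k => b (i + k)) _).trans
          (by rw [add_zero, Nat.add_sub_cancel' i.2.le])
    _ = a i := by simp [b]

end PartialMean

namespace L0

variable {Ω : Type*} [MeasurableSpace Ω] {P : Measure Ω}

theorem coeFn_ind {A : Set Ω} (hA : MeasurableSet A) : ⇑(ind P A) =ᵐ[P] A.indicator 1 := by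
  rw [ind, dif_pos hA]
  exact AEEqFun.coeFn_mk _ _

theorem coeFn_ind_mul {A : Set Ω} (hA : MeasurableSet A) (f : L0 P) :
    ⇑(ind P A * f) =ᵐ[P] A.indicator f := by
  filter_upwards [AEEqFun.coeFn_mul (ind P A) f, coeFn_ind hA] with ω h₁ h₂
  by_cases hω : ω ∈ A <;> simp [h₁, h₂, hω]

theorem ind_nonneg {A : Set Ω} (hA : MeasurableSet A) : 0 ≤ ind P A := by
  rw [← AEEqFun.coeFn_le]
  filter_upwards [coeFn_ind hA, AEEqFun.coeFn_zero (β := ℝ)] with ω h₁ h₀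
  by_cases hω : ω ∈ A <;> simp [h₁, h₀, hω]

theorem ind_le_one {A : Set Ω} (hA : MeasurableSet A) : ind P A ≤ 1 := by
  rw [← AEEqFun.coeFn_le]
  filter_upwards [coeFn_ind hA, AEEqFun.coeFn_one (β := ℝ)] with ω h₁ h₀
  by_cases hω : ω ∈ A <;> simp [h₁, h₀, hω]

theorem ind_mul_le_ind_mul_iff {A : Set Ω} (hA : MeasurableSet A) {f g : L0 P} :
    ind P A * f ≤ ind P A * g ↔ ∀ᵐ ω ∂P, ω ∈ A → f ω ≤ g ω := by
  rw [← AEEqFun.coeFn_le]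
  refine eventually_congr ?_
  filter_upwards [coeFn_ind_mul hA f, coeFn_ind_mul hA g] with ω hf hg
  by_cases hω : ω ∈ A <;> simp [hf, hg, hω]

theorem ind_mul_eq_ind_mul_iff {A : Set Ω} (hA : MeasurableSet A) {f g : L0 P} :
    ind P A * f = ind P A * g ↔ ∀ᵐ ω ∂P, ω ∈ A → f ω = g ω := by
  rw [AEEqFun.ext_iff]
  refine eventually_congr ?_
  filter_upwards [coeFn_ind_mul hA f, coeFn_ind_mul hA g] with ω hf hg
  by_cases hω : ω ∈ A <;> simp [hf, hg, hω]

theorem ind_mul_self {A : Set Ω} (hA : MeasurableSet A) : ind P A * ind P A = ind P A := by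
  conv_rhs => rw [← mul_one (ind P A)]
  rw [ind_mul_eq_ind_mul_iff hA]
  filter_upwards [coeFn_ind hA, AEEqFun.coeFn_one (β := ℝ)] with ω h₁ h₀ hω
  simp [h₁, h₀, hω]

namespace IsPartition

variable {A : ℕ → Set Ω}

theorem ae_mem_unique (hA : IsPartition P A) : ∀ᵐ ω ∂P, ∀ i j, ω ∈ A i → ω ∈ A j → i = j := by
  simp only [ae_all_iff]
  intro i j
  by_cases hij : i = j
  · exact Eventually.of_forall fun _ _ _ => hij
  · filter_upwards [measure_eq_zero_iff_ae_notMem.1 (hA.disj i j hij)] with ω hω hi hj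
    exact absurd ⟨hi, hj⟩ hω

theorem ae_of_forall_mem [IsProbabilityMeasure P] (hA : IsPartition P A) {p : Ω → Prop}
    (h : ∀ i, ∀ᵐ ω ∂P, ω ∈ A i → p ω) : ∀ᵐ ω ∂P, p ω := by
  have hcover : ∀ᵐ ω ∂P, ω ∈ ⋃ i, A i := by
    rw [ae_iff, ← Set.compl_def, prob_compl_eq_zero_iff (MeasurableSet.iUnion hA.meas), hA.full]
  filter_upwards [hcover, ae_all_iff.2 h] with ω hω hp
  obtain ⟨i, hi⟩ := Set.mem_iUnion.1 hω
  exact hp i hi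

theorem le_of_ind_mul_le [IsProbabilityMeasure P] (hA : IsPartition P A) {f g : L0 P}
    (h : ∀ i, ind P (A i) * f ≤ ind P (A i) * g) : f ≤ g :=
  AEEqFun.coeFn_le.1 <| hA.ae_of_forall_mem fun i => (ind_mul_le_ind_mul_iff (hA.meas i)).1 (h i)

theorem eq_of_ind_mul_eq [IsProbabilityMeasure P] (hA : IsPartition P A) {f g : L0 P}
    (h : ∀ i, ind P (A i) * f = ind P (A i) * g) : f = g :=
  AEEqFun.ext <| hA.ae_of_forall_mem fun i => (ind_mul_eq_ind_mul_iff (hA.meas i)).1 (h i)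

theorem eq_of_ind_smul_eq [IsProbabilityMeasure P] (hA : IsPartition P A) {d : ℕ}
    {Y Z : Fin d → L0 P} (h : ∀ i, ind P (A i) • Y = ind P (A i) • Z) : Y = Z :=
  funext fun k => hA.eq_of_ind_mul_eq fun i => congrFun (h i) k

theorem exists_isGluing1 (hA : IsPartition P A) (f : ℕ → L0 P) : ∃ g, IsGluing1 P A f g := by
  -- `G` is built on the points lying in a single `A i`, which is almost all of `A i`.
  set core : ℕ → Set Ω := fun i => A i \ ⋃ j ∈ ({i}ᶜ : Set ℕ), A j
  have hcore_meas : ∀ i, MeasurableSet (core i) := fun i =>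
    (hA.meas i).diff (.biUnion (Set.to_countable _) fun j _ => hA.meas j)
  obtain ⟨G, hG, hGf⟩ := exists_measurable_piecewise core hcore_meas (fun i => ⇑(f i))
    (fun i => (f i).measurable) fun i j hij ω hω =>
      absurd (Set.mem_biUnion (Ne.symm hij) hω.2.1) hω.1.2
  refine ⟨AEEqFun.mk G hG.aestronglyMeasurable,
    fun i => (ind_mul_eq_ind_mul_iff (hA.meas i)).2 ?_⟩
  filter_upwards [hA.ae_mem_unique, AEEqFun.coeFn_mk G hG.aestronglyMeasurable]
    with ω huniq hmk hω
  refine hmk.trans (hGf i ⟨hω, fun hω' => ?_⟩)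
  obtain ⟨j, hj, hωj⟩ := Set.mem_iUnion₂.1 hω'
  exact hj (huniq j i hωj hω)

end IsPartition

theorem exists_isPartition_subordinate [IsProbabilityMeasure P] {ι : Type*} [Countable ι]
    [Nonempty ι] (B : ι → Set Ω) (hB : ∀ i, MeasurableSet (B i)) (hcover : ∀ ω, ∃ i, ω ∈ B i) :
    ∃ (A : ℕ → Set Ω) (e : ℕ → ι), IsPartition P A ∧ ∀ n, A n ⊆ B (e n) := by
  obtain ⟨e, he⟩ := exists_surjective_nat ι
  refine ⟨disjointed (B ∘ e), e, ⟨.disjointed fun n => hB (e n), fun i j hij => ?_, ?_⟩,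
    disjointed_subset _⟩
  · rw [Set.disjoint_iff_inter_eq_empty.1 (disjoint_disjointed _ hij), measure_empty]
  · rw [iUnion_disjointed, Set.iUnion_eq_univ_iff.2 fun ω => ?_, measure_univ]
    obtain ⟨i, hi⟩ := hcover ω
    obtain ⟨n, rfl⟩ := he i
    exact ⟨n, hi⟩

section Conv

variable {d : ℕ} {ι : Type*} [Fintype ι]

theorem nonempty_of_mem_conv [NeZero P] {X : ι → Fin d → L0 P} {Z : Fin d → L0 P}
    (hZ : Z ∈ conv P X) : Nonempty ι := by
  by_contra hι
  rw [not_nonempty_iff] at hι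
  obtain ⟨lam, -, hlam, -⟩ := hZ
  rw [Finset.univ_eq_empty, Finset.sum_empty] at hlam
  exact zero_ne_one hlam

theorem conv_comp_equiv_subset {κ : Type*} [Fintype κ] (X : ι → Fin d → L0 P) (e : κ ≃ ι) :
    conv P (X ∘ e) ⊆ conv P X := by
  rintro Z ⟨lam, hlam0, hlam1, rfl⟩
  refine ⟨lam ∘ e.symm, fun i => hlam0 _, (e.symm.sum_comp lam).trans hlam1, ?_⟩
  rw [← e.sum_comp]
  simp

theorem mem_conv_of_isGluing [IsProbabilityMeasure P] {X : ι → Fin d → L0 P}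
    {A : ℕ → Set Ω} (hA : IsPartition P A) {W : ℕ → Fin d → L0 P} (hW : ∀ n, W n ∈ conv P X)
    {Z : Fin d → L0 P} (hZ : IsGluing P A W Z) : Z ∈ conv P X := by
  choose lam hlam0 hlam1 hWlam using hW
  choose g hg using fun j => hA.exists_isGluing1 fun n => lam n j
  refine ⟨g, fun j => hA.le_of_ind_mul_le fun n => ?_, hA.eq_of_ind_mul_eq fun n => ?_,
    hA.eq_of_ind_smul_eq fun n => ?_⟩
  · rw [mul_zero, hg j n]
    exact mul_nonneg (ind_nonneg (hA.meas n)) (hlam0 n j)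
  · rw [Finset.mul_sum, Finset.sum_congr rfl fun j _ => hg j n, ← Finset.mul_sum, hlam1 n]
  · have hZn : ind P (A n) • Z = ind P (A n) • W n := funext fun k => hZ k n
    simp only [hZn, hWlam n, Finset.smul_sum, smul_smul, hg _ n]

theorem exists_mem_conv_ind_smul_eq [Nonempty ι] (X : ι → Fin d → L0 P) {S : Set Ω}
    (hS : MeasurableSet S) (μ : ι → L0 P) (hμ0 : ∀ i, 0 ≤ ind P S * μ i) (hμ1 : ∑ i, μ i = 1) :
    ∃ W ∈ conv P X, ind P S • W = ind P S • ∑ i, μ i • X i := by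
  classical
  obtain ⟨i₀⟩ := ‹Nonempty ι›
  set ν : ι → L0 P := fun i => ind P S * μ i + (1 - ind P S) * if i = i₀ then 1 else 0
  have hν : ∀ i, ind P S * ν i = ind P S * μ i := fun i => by
    linear_combination (μ i - if i = i₀ then 1 else 0) * ind_mul_self (P := P) hS
  refine ⟨∑ i, ν i • X i, ⟨ν, fun i => ?_, ?_, rfl⟩, ?_⟩
  · exact add_nonneg (hμ0 i) (mul_nonneg (sub_nonneg.2 (ind_le_one hS)) (by split_ifs <;> simp))
  · simp only [ν, Finset.sum_add_distrib, ← Finset.mul_sum, hμ1, Finset.sum_ite_eq',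
      Finset.mem_univ, if_true]
    ring
  · simp only [Finset.smul_sum, smul_smul, hν]

end Conv

section Barycentric

variable {d N : ℕ}

theorem bary_eq_partialMean (X : Fin N → Fin d → L0 P) (π : Equiv.Perm (Fin N)) :
    bary P X π = partialMean (X ∘ π) := by
  funext k
  rw [bary, partialMean, Finset.filter_ge_eq_Iic]
  rfl

theorem conv_partialMean_subset (Y : Fin N → Fin d → L0 P) :
    conv P (partialMean Y) ⊆ conv P Y := by
  rintro V ⟨μ, hμ0, hμ1, rfl⟩
  refine ⟨partialMeanWeight μ, fun i => Finset.sum_nonneg fun k _ => ?_, ?_,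
    sum_smul_partialMean μ Y⟩
  · exact smul_nonneg (by positivity) (hμ0 k)
  · rw [sum_partialMeanWeight, hμ1]

theorem conv_bary_subset (X : Fin N → Fin d → L0 P) (π : Equiv.Perm (Fin N)) :
    conv P (bary P X π) ⊆ conv P X := by
  rw [bary_eq_partialMean]
  exact (conv_partialMean_subset _).trans (conv_comp_equiv_subset X π)

theorem ind_mul_partialMeanCoeff_nonneg {S : Set Ω} (hS : MeasurableSet S) {a : Fin N → L0 P}
    (ha : ∀ k, 0 ≤ a k) (hS_anti : ∀ ω ∈ S, Antitone fun k => a k ω) (k : Fin N) :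
    0 ≤ ind P S * partialMeanCoeff a k := by
  rw [partialMeanCoeff, mul_smul_comm, mul_sub]
  refine smul_nonneg (by positivity) (sub_nonneg.2 ?_)
  split_ifs with h
  · exact (ind_mul_le_ind_mul_iff hS).2 <| Eventually.of_forall fun ω hω =>
      hS_anti ω hω (Fin.mk_le_mk.2 k.1.le_succ)
  · rw [mul_zero]
    exact mul_nonneg (ind_nonneg hS) (ha k)

theorem exists_mem_conv_bary_ind_smul_eq [Nonempty (Fin N)] (X : Fin N → Fin d → L0 P)
    {lam : Fin N → L0 P} (hlam0 : ∀ j, 0 ≤ lam j) (hlam1 : ∑ j, lam j = 1)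
    (π : Equiv.Perm (Fin N)) {S : Set Ω} (hS : MeasurableSet S)
    (hS_anti : ∀ ω ∈ S, Antitone fun k => lam (π k) ω) :
    ∃ W ∈ conv P (bary P X π), ind P S • W = ind P S • ∑ j, lam j • X j := by
  have hcoeff := partialMeanWeight_partialMeanCoeff (lam ∘ π)
  have hsum : ∑ k, partialMeanCoeff (lam ∘ π) k • partialMean (X ∘ π) k = ∑ j, lam j • X j := by
    rw [sum_smul_partialMean, hcoeff]
    exact Equiv.sum_comp π fun j => lam j • X j
  rw [bary_eq_partialMean, ← hsum]
  refine exists_mem_conv_ind_smul_eq _ hS _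
    (ind_mul_partialMeanCoeff_nonneg hS (fun k => hlam0 (π k)) hS_anti) ?_
  rw [← sum_partialMeanWeight, hcoeff]
  exact (Equiv.sum_comp π lam).trans hlam1

theorem conv_subset_sigmaHull_bary [IsProbabilityMeasure P] (X : Fin N → Fin d → L0 P) :
    conv P X ⊆ sigmaHull P (⋃ π : Equiv.Perm (Fin N), conv P (bary P X π)) := by
  rintro Z hZ
  have := nonempty_of_mem_conv hZ
  obtain ⟨lam, hlam0, hlam1, rfl⟩ := hZ
  set B : Equiv.Perm (Fin N) → Set Ω := fun π => {ω | Antitone fun k => lam (π k) ω}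
  have hB : ∀ π, MeasurableSet (B π) := fun π => by
    simp only [B, Antitone, Set.ofPred_forall]
    exact .iInter fun i => .iInter fun j => .iInter fun _ =>
      measurableSet_le (lam _).measurable (lam _).measurable
  have hcover : ∀ ω, ∃ π, ω ∈ B π := fun ω =>
    ⟨Tuple.sort fun j => OrderDual.toDual (lam j ω),
      Tuple.monotone_sort fun j => OrderDual.toDual (lam j ω)⟩
  obtain ⟨A, e, hA, hAB⟩ := exists_isPartition_subordinate (P := P) B hB hcover
  choose W hW hWZ using fun n => exists_mem_conv_bary_ind_smul_eq X hlam0 hlam1 (e n)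
    (hA.meas n) fun ω hω => hAB n hω
  exact ⟨A, W, hA, fun n => Set.mem_iUnion.2 ⟨e n, hW n⟩, fun k n => (congrFun (hWZ n) k).symm⟩

end Barycentric

end L0

open MeasureTheory in
theorem stmt_7_general {Ω : Type*} [MeasurableSpace Ω] (P : Measure Ω) [IsProbabilityMeasure P]
    {d N : ℕ} (X : Fin N → Fin d → L0 P) :
    L0.sigmaHull P (⋃ π : Equiv.Perm (Fin N), L0.conv P (L0.bary P X π)) = L0.conv P X := by
  refine subset_antisymm ?_ (L0.conv_subset_sigmaHull_bary X)
  rintro Z ⟨A, W, hA, hW, hZ⟩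
  refine L0.mem_conv_of_isGluing hA (fun n => ?_) hZ
  obtain ⟨π, hπ⟩ := Set.mem_iUnion.1 (hW n)
  exact L0.conv_bary_subset X π hπ

open MeasureTheory in
/-- the σ-stable hull of the union of the barycentric subdivision of a
conditional simplex is the simplex itself. -/
theorem stmt_7 {Ω : Type*} [MeasurableSpace Ω] (P : Measure Ω) [IsProbabilityMeasure P]
    {d N : ℕ} (X : Fin N → Fin d → L0 P) (hX : L0.AffInd P X) :
    L0.sigmaHull P (⋃ π : Equiv.Perm (Fin N), L0.conv P (L0.bary P X π)) = L0.conv P X :=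
  stmt_7_general P X
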